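/- Let (X, ‖·‖) be a normed space and let G = (V, E) be a geometric 1-graph with V ⊆ X such that the closure of V is convex. Then for any u, v ∈ V with ‖u - v‖ ≥ 1, the graph distance satisfies d_G(u,v) = ⌊‖u - v‖⌋ + 1; and if ‖u - v‖ < 1, then d_G(u,v) = 0 if u = v, 1 if u ∼ v, and 2 otherwise. -/

import Mathlib

open scoped Classical

/-- Threshold 1: edges only between points at norm-distance less than 1. -/
def Threshold1 {X : Type*} [NormedAddCommGroup X] {V : Set X} (G : SimpleGraph V) : Prop :=
  ∀ u v : V, G.Adj u v → ‖(u : X) - v‖ < 1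

/-- Geometric existential closure at level 1. -/
def GEC {X : Type*} [NormedAddCommGroup X] {V : Set X} (G : SimpleGraph V) : Prop :=
  ∀ δ' : ℝ, 0 < δ' → δ' < 1 → ∀ x : V, ∀ A B : Finset V, Disjoint A B →
    (∀ w : V, w ∈ A ∨ w ∈ B → ‖(x : X) - w‖ < 1) →
    ∃ z : V, z ∉ A ∧ z ∉ B ∧ z ≠ x ∧
      (∀ a ∈ A, G.Adj z a) ∧ (∀ b ∈ B, ¬ G.Adj z b) ∧
      (∀ w : V, w ∈ A ∨ w ∈ B → ‖(z : X) - w‖ < 1) ∧ ‖(x : X) - z‖ < δ'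

/-! Each edge is shorter than 1, so by the triangle inequality a walk with `k ≥ 1` edges joins
points less than `k` apart; hence `‖u - v‖ < d_G(u, v)` for `u ≠ v`. Conversely, for any `m ≥ 2`
with `‖u - v‖ < m`, subdivide the segment `[u, v] ⊆ closure V` into `m` steps of length `< 1`.
Geometric existential closure, applied at a vertex of `V` near each subdivision point, yields a
neighbour of the current end of the walk which again lies near the segment; at the last interior
point it yields a common neighbour of the current end and `v`. This is a walk of length exactly
`m`, and `m = ⌊‖u - v‖⌋ + 1`, resp. `m = 2`, gives the matching upper bounds. -/

section

variable {X : Type*} [NormedAddCommGroup X] {V : Set X} {G : SimpleGraph V}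

namespace Threshold1

theorem norm_sub_le_length (ht : Threshold1 G) {a b : V} (w : G.Walk a b) :
    ‖(a : X) - b‖ ≤ w.length := by
  induction w with
  | nil => simp
  | @cons a c b hac p ih =>
    calc ‖(a : X) - b‖ ≤ ‖(a : X) - c‖ + ‖(c : X) - b‖ := norm_sub_le_norm_sub_add_norm_sub _ _ _
      _ ≤ 1 + p.length := add_le_add (ht a c hac).le ih
      _ = (p.cons hac).length := by simp [add_comm]

theorem norm_sub_lt_length (ht : Threshold1 G) {a b : V} (w : G.Walk a b) (hw : w.length ≠ 0) :
    ‖(a : X) - b‖ < w.length := by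
  cases w with
  | nil => simp at hw
  | @cons _ c _ hac p =>
    calc ‖(a : X) - b‖ ≤ ‖(a : X) - c‖ + ‖(c : X) - b‖ := norm_sub_le_norm_sub_add_norm_sub _ _ _
      _ < 1 + p.length := add_lt_add_of_lt_of_le (ht a c hac) (ht.norm_sub_le_length p)
      _ = (p.cons hac).length := by simp [add_comm]

theorem norm_sub_lt_dist (ht : Threshold1 G) {u v : V} (huv : G.Reachable u v) (hne : u ≠ v) :
    ‖(u : X) - v‖ < G.dist u v := by
  obtain ⟨w, hw⟩ := huv.exists_walk_length_eq_dist
  rw [← hw]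
  exact ht.norm_sub_lt_length w (hw ▸ (huv.pos_dist_of_ne hne).ne')

end Threshold1

namespace GEC

theorem exists_common_adj_near (hgec : GEC G) {y : X} (hy : y ∈ closure V) {ε : ℝ} (hε : 0 < ε)
    {a b : V} (ha : ‖(a : X) - y‖ + ε < 1) (hb : ‖(b : X) - y‖ + ε < 1) :
    ∃ z : V, G.Adj a z ∧ G.Adj b z ∧ ‖(z : X) - y‖ < ε := by
  obtain ⟨x, hxV, hxy⟩ := Metric.mem_closure_iff.1 hy (ε / 2) (by positivity)
  rw [dist_comm, dist_eq_norm] at hxy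
  have hx_near : ∀ c : V, ‖(c : X) - y‖ + ε < 1 → ‖x - c‖ < 1 := fun c hc =>
    calc ‖x - c‖ ≤ ‖x - y‖ + ‖y - c‖ := norm_sub_le_norm_sub_add_norm_sub _ _ _
      _ < 1 := by rw [norm_sub_rev y]; linarith
  obtain ⟨z, -, -, -, hadj, -, -, hxz⟩ :=
    hgec (ε / 2) (by positivity) (by linarith [norm_nonneg ((a : X) - y)]) ⟨x, hxV⟩ {a, b} ∅
      (Finset.disjoint_empty_right _) (by
        rintro c (hc | hc)
        · rcases Finset.mem_insert.1 hc with rfl | hc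
          · exact hx_near _ ha
          · exact Finset.mem_singleton.1 hc ▸ hx_near _ hb
        · simp at hc)
  refine ⟨z, (hadj a (by simp)).symm, (hadj b (by simp)).symm, ?_⟩
  calc ‖(z : X) - y‖ ≤ ‖(z : X) - x‖ + ‖x - y‖ := norm_sub_le_norm_sub_add_norm_sub _ _ _
    _ < ε := by rw [norm_sub_rev]; linarith [show ‖x - z‖ < ε / 2 from hxz]

variable {u v : V} {p : ℕ → X} {ε : ℝ}

theorem exists_walk_near_chain (hgec : GEC G) (hε : 0 < ε) (hp0 : p 0 = u) {m : ℕ}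
    (hpV : ∀ i ≤ m, p i ∈ closure V) (hstep : ∀ i < m, ‖p i - p (i + 1)‖ + 2 * ε < 1) :
    ∀ i ≤ m, ∃ (z : V) (w : G.Walk u z), w.length = i ∧ ‖(z : X) - p i‖ < ε := by
  intro i
  induction i with
  | zero => exact fun _ => ⟨u, .nil, rfl, by simpa [hp0] using hε⟩
  | succ i ih =>
    intro hi
    obtain ⟨z, w, hwi, hz⟩ := ih (by omega)
    have hz' : ‖(z : X) - p (i + 1)‖ + ε < 1 := by
      linarith [norm_sub_le_norm_sub_add_norm_sub (z : X) (p i) (p (i + 1)), hstep i hi]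
    obtain ⟨z', hzz', -, hz'near⟩ := hgec.exists_common_adj_near (hpV _ hi) hε hz' hz'
    exact ⟨z', w.concat hzz', by simp [hwi], hz'near⟩

theorem exists_walk_of_chain (hgec : GEC G) (hε : 0 < ε) (hp0 : p 0 = u) {m : ℕ} (hm : 2 ≤ m)
    (hpm : p m = v) (hpV : ∀ i ≤ m, p i ∈ closure V)
    (hstep : ∀ i < m, ‖p i - p (i + 1)‖ + 2 * ε < 1) :
    ∃ w : G.Walk u v, w.length = m := by
  obtain ⟨k, rfl⟩ := Nat.exists_eq_add_of_le' hm
  obtain ⟨z, w, hwk, hz⟩ := hgec.exists_walk_near_chain hε hp0 hpV hstep k (by omega)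
  have hzk : ‖(z : X) - p (k + 1)‖ + ε < 1 := by
    linarith [norm_sub_le_norm_sub_add_norm_sub (z : X) (p k) (p (k + 1)), hstep k (by omega)]
  have hvk : ‖(v : X) - p (k + 1)‖ + ε < 1 := by
    rw [← hpm, norm_sub_rev]; linarith [hstep (k + 1) (by omega)]
  obtain ⟨z', hzz', hvz', -⟩ := hgec.exists_common_adj_near (hpV _ (by omega)) hε hzk hvk
  exact ⟨(w.concat hzz').concat hvz'.symm, by simp [hwk]⟩

end GEC

theorem GEC.exists_walk_length_eq [NormedSpace ℝ X] (hconv : Convex ℝ (closure V)) (hgec : GEC G)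
    (u v : V) {m : ℕ} (hm : 2 ≤ m) (huv : ‖(u : X) - v‖ < m) :
    ∃ w : G.Walk u v, w.length = m := by
  have hm0 : (0 : ℝ) < m := by positivity
  set p : ℕ → X := fun i => AffineMap.lineMap (u : X) v ((i : ℝ) / m)
  have hstep_len : ‖(u : X) - v‖ / m < 1 := (div_lt_one hm0).2 huv
  refine hgec.exists_walk_of_chain (p := p) (ε := (1 - ‖(u : X) - v‖ / m) / 4) (by linarith)
    (by simp [p]) hm (by simp [p, hm0.ne']) (fun i hi => ?_) (fun i _ => ?_)
  · refine hconv.lineMap_mem (subset_closure u.2) (subset_closure v.2) ⟨by positivity, ?_⟩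
    exact (div_le_one hm0).2 (by exact_mod_cast hi)
  · have : ‖p i - p (i + 1)‖ = ‖(u : X) - v‖ / m := by
      rw [← dist_eq_norm, dist_lineMap_lineMap, dist_eq_norm, Real.norm_eq_abs, ← sub_div,
        Nat.cast_succ, sub_add_cancel_left, abs_div, abs_neg, abs_one, abs_of_pos hm0, dist_eq_norm]
      ring
    linarith

end

theorem graph_dist_of_geometric_one_graph_general
    {X : Type*} [NormedAddCommGroup X] [NormedSpace ℝ X]
    (V : Set X) (hconv : Convex ℝ (closure V))
    (G : SimpleGraph V) (ht : Threshold1 G) (hgec : GEC G) (u v : V) :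
    (1 ≤ ‖(u : X) - v‖ → G.dist u v = ⌊‖(u : X) - v‖⌋₊ + 1) ∧
    (‖(u : X) - v‖ < 1 →
      G.dist u v = if u = v then 0 else if G.Adj u v then 1 else 2) := by
  constructor
  · intro hD
    have hne : u ≠ v := by rintro rfl; exact absurd hD (by simp)
    obtain ⟨w, hw⟩ := hgec.exists_walk_length_eq hconv u v (m := ⌊‖(u : X) - v‖⌋₊ + 1)
      (by simpa using (Nat.one_le_floor_iff _).2 hD) (by exact_mod_cast Nat.lt_floor_add_one _)
    have hlt : ⌊‖(u : X) - v‖⌋₊ < G.dist u v :=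
      (Nat.floor_lt (norm_nonneg _)).2 (ht.norm_sub_lt_dist ⟨w⟩ hne)
    exact le_antisymm (hw ▸ SimpleGraph.dist_le w) hlt
  · intro hD
    split_ifs with hne hadj
    · simp [hne]
    · exact SimpleGraph.dist_eq_one_iff_adj.2 hadj
    · obtain ⟨w, hw⟩ :=
        hgec.exists_walk_length_eq hconv u v le_rfl (by simpa using hD.trans one_lt_two)
      have hle : G.dist u v ≤ 2 := hw ▸ SimpleGraph.dist_le w
      have hpos := SimpleGraph.Reachable.pos_dist_of_ne ⟨w⟩ hne
      have hne1 : G.dist u v ≠ 1 := fun h => hadj (SimpleGraph.dist_eq_one_iff_adj.1 h)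
      omega

/-- in a geometric 1-graph with convex closure of the vertex set, the graph
distance of `u, v` with `‖u - v‖ ≥ 1` is `⌊‖u - v‖⌋ + 1`, while for `‖u - v‖ < 1` it is
0, 1 or 2 according as `u = v`, `u ∼ v`, or neither. -/
theorem graph_dist_of_geometric_one_graph
    {X : Type*} [NormedAddCommGroup X] [NormedSpace ℝ X]
    (V : Set X) (hVc : V.Countable) (hconv : Convex ℝ (closure V))
    (G : SimpleGraph V) (ht : Threshold1 G) (hgec : GEC G) (u v : V) :
    (1 ≤ ‖(u : X) - v‖ → G.dist u v = ⌊‖(u : X) - v‖⌋₊ + 1) ∧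
    (‖(u : X) - v‖ < 1 →
      G.dist u v = if u = v then 0 else if G.Adj u v then 1 else 2) :=
  graph_dist_of_geometric_one_graph_general V hconv G ht hgec u v
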